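/- arXiv:2111.10324 — 6 statements merged into one kernel-verified Lean document; each statement's English description precedes it below -/
import Mathlib

section
/- Let p be an odd prime, 0 ≤ e₂ ≤ e₃ integers, ε₁, ε₂, ε₃ ∈ ℤ_p^×, and suppose the ternary ℤ_p-lattice M = ⟨ε₁, p^{e₂}ε₂, p^{e₃}ε₃⟩ is isotropic. If -p^{e₂}ε₁ε₂ is a square in ℚ_p^×, then for any ℤ_p-lattice L of rank ≥ 4 containing M as an orthogonal summand with the remaining diagonal entries of p-order at least e₃, one has ν'_p(L) = ν_p(L) = e₂ + 1. -/
/-- `nuS p QS s` is `ord_p(s·p^{2u})` for the least `u ≥ 0` with `s·p^{2u} ∈ QS`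
(`⊤` if no such `u` exists). -/
noncomputable def nuS (p : ℕ) [Fact p.Prime] (QS : Set ℤ_[p]) (s : ℤ_[p]) : ℕ∞ :=
  sInf {m : ℕ∞ | ∃ u : ℕ, m = ((s.valuation + 2 * u : ℕ) : ℕ∞) ∧
    s * (p : ℤ_[p]) ^ (2 * u) ∈ QS}

/-- The maximum of `nuS p QS s` over `s ∈ SC`. -/
noncomputable def nuMax (p : ℕ) [Fact p.Prime] (QS SC : Set ℤ_[p]) : ℕ∞ :=
  sSup (nuS p QS '' SC)

/-- The set `SC_p` of square-class representatives: `{1,3,5,7,2,6,10,14}` for `p = 2`,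
and `{1, Δ, p, pΔ}` for odd `p`, where `Δ` is a (chosen) nonsquare unit. -/
def SCgen (p : ℕ) [Fact p.Prime] (Δ : ℤ_[p]) : Set ℤ_[p] :=
  if p = 2 then {1, 3, 5, 7, 2, 6, 10, 14} else {1, Δ, (p : ℤ_[p]), (p : ℤ_[p]) * Δ}

/-!
Since `-p^{e₂}ε₁ε₂` is a square, `e₂ = 2m` is even and `-ε₁ε₂` is a unit square, so `⟨ε₁, ε₂⟩`
is a hyperbolic plane over `ℤ_p` and, by `ε₁(p^m x)² + p^{e₂}ε₂y² = p^{e₂}(ε₁x² + ε₂y²)`, every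
multiple of `p^{e₂}` is represented. Hence `ν_{p,s} ≤ e₂` for the unit classes and
`ν_{p,s} ≤ e₂ + 1` for `s ∈ {p, pΔ}`. All diagonal entries but `ε₁` are divisible by `p^{e₂}`, so a represented value of
order `< e₂` has the even order of `ε₁x²`; thus `p^{2u+1}η` with `2u + 1 < e₂` is not represented
and `ν_{p,p} = ν_{p,pΔ} = e₂ + 1`. The maximum is attained at two distinct classes, so `ν'_p = ν_p`.
-/

open Finset

section DiagonalForm
variable {R : Type*} [CommRing R]

theorem exists_mul_sq_add_mul_sq_eq (h2 : IsUnit (2 : R)) (a b δ : Rˣ)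
    (hδ : (δ : R) ^ 2 = -(a * b)) (c : R) : ∃ x y : R, a * x ^ 2 + b * y ^ 2 = c := by
  obtain ⟨t, ht⟩ := h2.exists_right_inv
  -- With `y = a δ⁻¹ z` the form becomes `a (x² - z²) = a (x + z) (x - z)`.
  refine ⟨t * (1 + c * ↑a⁻¹), t * (c * ↑a⁻¹ - 1) * a * ↑δ⁻¹, ?_⟩
  linear_combination (a * t ^ 2 * (c * ↑a⁻¹ - 1) ^ 2) *
      ((↑δ⁻¹ : R) ^ 2 * hδ - (1 + δ * ↑δ⁻¹) * δ.mul_inv) +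
    c * (2 * t + 1) * a * ↑a⁻¹ * ht + c * a.mul_inv

theorem exists_sum_range_eq_of_two_le {k : ℕ} (hk : 2 ≤ k) (d : ℕ → R) (a b : R) :
    ∃ x : ℕ → R, ∑ i ∈ range k, d i * x i ^ 2 = d 0 * a ^ 2 + d 1 * b ^ 2 := by
  obtain ⟨n, rfl⟩ := Nat.exists_eq_add_of_le' hk
  refine ⟨fun i => if i = 0 then a else if i = 1 then b else 0, ?_⟩
  simp [sum_range_succ', add_comm]

theorem exists_sum_range_eq_mul_sq_add {k : ℕ} (hk : 1 ≤ k) {d : ℕ → R} {a : R}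
    (hd : ∀ i, 1 ≤ i → i < k → a ∣ d i) (x : ℕ → R) :
    ∃ r, ∑ i ∈ range k, d i * x i ^ 2 = d 0 * x 0 ^ 2 + a * r := by
  obtain ⟨n, rfl⟩ := Nat.exists_eq_add_of_le' hk
  rw [sum_range_succ', add_comm]
  obtain ⟨r, hr⟩ : a ∣ ∑ i ∈ range n, d (i + 1) * x (i + 1) ^ 2 :=
    dvd_sum fun i hi => (hd (i + 1) (by omega) (by simpa using hi)).mul_right _
  exact ⟨r, by rw [hr]⟩

end DiagonalForm

namespace PadicInt
variable {p : ℕ} [Fact p.Prime]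

theorem isUnit_two (hp : p ≠ 2) : IsUnit (2 : ℤ_[p]) :=
  isUnit_iff.mpr <| by
    exact_mod_cast norm_natCast_eq_one_iff.mpr
      ((Nat.coprime_primes Fact.out Nat.prime_two).mpr hp)

theorem valuation_eq_zero_of_isUnit {x : ℤ_[p]} (hx : IsUnit x) : x.valuation = 0 := by
  by_contra h
  have : (p : ℤ_[p]) ^ 1 ∣ x := Ideal.mem_span_singleton.mp <|
    (mem_span_pow_iff_le_valuation x hx.ne_zero 1).mpr (by omega)
  exact prime_p.not_isUnit (isUnit_of_dvd_unit (by simpa using this) hx)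

theorem pow_dvd_pow_mul_iff {η : ℤ_[p]} (hη : IsUnit η) {n j : ℕ} :
    (p : ℤ_[p]) ^ n ∣ p ^ j * η ↔ n ≤ j := by
  refine ⟨fun h => ?_, fun h => (pow_dvd_pow _ h).mul_right _⟩
  have := (mem_span_pow_iff_le_valuation _ (mul_ne_zero (pow_ne_zero _ (NeZero.ne _))
    hη.ne_zero) n).mp (Ideal.mem_span_singleton.mpr h)
  rwa [valuation_p_pow_mul _ _ hη.ne_zero, valuation_eq_zero_of_isUnit hη, add_zero] at this

theorem even_of_mul_sq_add_pow_mul_eq {ε η : ℤ_[p]} (hε : IsUnit ε) (hη : IsUnit η) {j e : ℕ}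
    (hj : j < e) {x r : ℤ_[p]} (h : ε * x ^ 2 + p ^ e * r = p ^ j * η) : Even j := by
  have hr : ∀ i ≤ e, (p : ℤ_[p]) ^ i ∣ p ^ e * r := fun i hi => (pow_dvd_pow _ hi).mul_right _
  rcases eq_or_ne x 0 with rfl | hx
  · have : (p : ℤ_[p]) ^ e ∣ p ^ j * η := by simp [← h]
    have := (pow_dvd_pow_mul_iff hη).mp this
    omega
  obtain ⟨ξ, n, rfl⟩ : ∃ (ξ : ℤ_[p]ˣ) (n : ℕ), x = ξ * p ^ n := ⟨_, _, unitCoeff_spec hx⟩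
  have hεx : ε * (ξ * p ^ n) ^ 2 = p ^ (2 * n) * (ε * (ξ : ℤ_[p]) ^ 2) := by ring
  have hu : IsUnit (ε * (ξ : ℤ_[p]) ^ 2) := hε.mul (ξ.isUnit.pow 2)
  rw [hεx] at h
  have hle : ¬j + 1 ≤ 2 * n := fun hle => by
    have : (p : ℤ_[p]) ^ (j + 1) ∣ p ^ j * η :=
      h ▸ dvd_add ((pow_dvd_pow _ hle).mul_right _) (hr _ (by omega))
    have := (pow_dvd_pow_mul_iff hη).mp this
    omega
  have hge : ¬2 * n + 1 ≤ j := fun hge => by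
    have : (p : ℤ_[p]) ^ (2 * n + 1) ∣ p ^ (2 * n) * (ε * (ξ : ℤ_[p]) ^ 2) := by
      rw [eq_sub_of_add_eq h]
      exact dvd_sub ((pow_dvd_pow _ hge).mul_right _) (hr _ (by omega))
    have := (pow_dvd_pow_mul_iff hu).mp this
    omega
  exact ⟨n, by omega⟩

theorem exists_sq_eq_of_pow_mul_eq_sq {e : ℕ} {u : ℤ_[p]ˣ} {γ : ℚ_[p]}
    (h : (p : ℚ_[p]) ^ e * (u : ℚ_[p]) = γ ^ 2) :
    ∃ m, e = 2 * m ∧ ∃ δ : ℤ_[p]ˣ, (δ : ℤ_[p]) ^ 2 = u := by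
  have hp : (p : ℚ_[p]) ≠ 0 := NeZero.ne _
  have hu : (u : ℚ_[p]) ≠ 0 := coe_ne_zero.mpr u.ne_zero
  have hγ : γ ≠ 0 := by
    rintro rfl
    simp [hp, hu] at h
  have hv := congrArg Padic.valuation h
  rw [Padic.valuation_mul (pow_ne_zero _ hp) hu, Padic.valuation_pow, Padic.valuation_p,
    valuation_coe, valuation_eq_zero_of_isUnit u.isUnit, Padic.valuation_pow] at hv
  set m := γ.valuation.toNat
  have hm : γ.valuation = m := by omega
  have hnorm : ‖γ / (p : ℚ_[p]) ^ m‖ = 1 := by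
    rw [norm_div, Padic.norm_eq_zpow_neg_valuation hγ, Padic.norm_p_pow, hm,
      div_self (zpow_ne_zero _ (by exact_mod_cast (NeZero.ne p)))]
  refine ⟨m, by omega, mkUnits hnorm, Subtype.coe_injective ?_⟩
  have he : e = 2 * m := by omega
  push_cast
  rw [mkUnits_eq, div_pow, ← h, he]
  field_simp
  ring

end PadicInt

section Nu
variable {p : ℕ} [Fact p.Prime] {QS : Set ℤ_[p]}

theorem nuS_le_of_mul_mem {s : ℤ_[p]} {u : ℕ} (h : s * (p : ℤ_[p]) ^ (2 * u) ∈ QS) :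
    nuS p QS s ≤ (s.valuation + 2 * u : ℕ) :=
  sInf_le ⟨u, rfl, h⟩

theorem le_nuS {s : ℤ_[p]} {n : ℕ∞}
    (h : ∀ u : ℕ, s * (p : ℤ_[p]) ^ (2 * u) ∈ QS → n ≤ (s.valuation + 2 * u : ℕ)) :
    n ≤ nuS p QS s :=
  le_sInf fun _ ⟨u, hu, hmem⟩ => hu ▸ h u hmem

theorem nuMax_eq {SC : Set ℤ_[p]} {n : ℕ∞} (hle : ∀ s ∈ SC, nuS p QS s ≤ n) {s₁ : ℤ_[p]}
    (hs₁ : s₁ ∈ SC) (h₁ : nuS p QS s₁ = n) : nuMax p QS SC = n :=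
  IsGreatest.csSup_eq ⟨⟨s₁, hs₁, h₁⟩, by rintro _ ⟨s, hs, rfl⟩; exact hle s hs⟩

variable {m : ℕ}

theorem nuS_le_of_isUnit (hmul : ∀ c, (p : ℤ_[p]) ^ (2 * m) ∣ c → c ∈ QS) {s : ℤ_[p]}
    (hs : IsUnit s) : nuS p QS s ≤ (2 * m : ℕ) := by
  simpa [PadicInt.valuation_eq_zero_of_isUnit hs] using
    nuS_le_of_mul_mem (hmul _ (dvd_mul_left _ s))

theorem nuS_p_mul_eq (hmul : ∀ c, (p : ℤ_[p]) ^ (2 * m) ∣ c → c ∈ QS)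
    (hodd : ∀ j η, Odd j → j < 2 * m → IsUnit η → (p : ℤ_[p]) ^ j * η ∉ QS)
    {η : ℤ_[p]} (hη : IsUnit η) : nuS p QS (p * η) = (2 * m + 1 : ℕ) := by
  have hv : ((p : ℤ_[p]) * η).valuation = 1 := by
    simpa [PadicInt.valuation_eq_zero_of_isUnit hη] using
      PadicInt.valuation_p_pow_mul 1 η hη.ne_zero
  refine le_antisymm ?_ (le_nuS fun u hu => ?_)
  · simpa [hv, add_comm] using nuS_le_of_mul_mem (hmul _ (dvd_mul_left _ (p * η)))
  · rw [hv, Nat.cast_le]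
    by_contra! hlt
    refine hodd (2 * u + 1) η (odd_two_mul_add_one u) (by omega) hη ?_
    convert hu using 1
    ring

theorem SCgen_of_ne_two (hp : p ≠ 2) (Δ : ℤ_[p]) :
    SCgen p Δ = {1, Δ, (p : ℤ_[p]), p * Δ} :=
  if_neg hp

theorem nuS_le_of_mem_SCgen (hmul : ∀ c, (p : ℤ_[p]) ^ (2 * m) ∣ c → c ∈ QS)
    (hodd : ∀ j η, Odd j → j < 2 * m → IsUnit η → (p : ℤ_[p]) ^ j * η ∉ QS)
    (hp : p ≠ 2) {Δ : ℤ_[p]} (hΔ : IsUnit Δ) :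
    ∀ s ∈ SCgen p Δ, nuS p QS s ≤ (2 * m + 1 : ℕ) := by
  have hunit {s : ℤ_[p]} (hs : IsUnit s) : nuS p QS s ≤ (2 * m + 1 : ℕ) :=
    (nuS_le_of_isUnit hmul hs).trans (by norm_cast; omega)
  rw [SCgen_of_ne_two hp]
  rintro s (rfl | rfl | rfl | rfl)
  · exact hunit isUnit_one
  · exact hunit hΔ
  · simpa using (nuS_p_mul_eq hmul hodd isUnit_one).le
  · exact (nuS_p_mul_eq hmul hodd hΔ).le

theorem nuMax_SCgen (hmul : ∀ c, (p : ℤ_[p]) ^ (2 * m) ∣ c → c ∈ QS)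
    (hodd : ∀ j η, Odd j → j < 2 * m → IsUnit η → (p : ℤ_[p]) ^ j * η ∉ QS)
    (hp : p ≠ 2) {Δ : ℤ_[p]} (hΔ : IsUnit Δ) :
    nuMax p QS (SCgen p Δ) = (2 * m + 1 : ℕ) :=
  nuMax_eq (nuS_le_of_mem_SCgen hmul hodd hp hΔ) (by simp [SCgen_of_ne_two hp])
    (nuS_p_mul_eq hmul hodd hΔ)

theorem nuMax_SCgen_diff (hmul : ∀ c, (p : ℤ_[p]) ^ (2 * m) ∣ c → c ∈ QS)
    (hodd : ∀ j η, Odd j → j < 2 * m → IsUnit η → (p : ℤ_[p]) ^ j * η ∉ QS)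
    (hp : p ≠ 2) {Δ : ℤ_[p]} (hΔ : IsUnit Δ) (hΔ₁ : Δ ≠ 1) {s₀ : ℤ_[p]}
    (hs₀ : s₀ ∈ SCgen p Δ) (h₀ : nuS p QS s₀ = (2 * m + 1 : ℕ)) :
    nuMax p QS (SCgen p Δ \ {s₀}) = (2 * m + 1 : ℕ) := by
  have hle : ∀ s ∈ SCgen p Δ \ {s₀}, nuS p QS s ≤ (2 * m + 1 : ℕ) :=
    fun s hs => nuS_le_of_mem_SCgen hmul hodd hp hΔ s hs.1
  have hpΔ : (p : ℤ_[p]) * Δ ≠ p := fun h => hΔ₁ <|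
    mul_left_cancel₀ (NeZero.ne (p : ℤ_[p])) (h.trans (mul_one _).symm)
  have hunit {s : ℤ_[p]} (hs : IsUnit s) : nuS p QS s ≠ (2 * m + 1 : ℕ) := fun h =>
    absurd (h ▸ nuS_le_of_isUnit hmul hs) (by norm_cast; omega)
  rw [SCgen_of_ne_two hp] at hs₀ hle ⊢
  rcases hs₀ with rfl | rfl | rfl | rfl
  · exact absurd h₀ (hunit isUnit_one)
  · exact absurd h₀ (hunit hΔ)
  · exact nuMax_eq hle (by simp [hpΔ]) (nuS_p_mul_eq hmul hodd hΔ)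
  · exact nuMax_eq (s₁ := p) hle (by simp [hpΔ.symm])
      (by simpa using nuS_p_mul_eq hmul hodd isUnit_one)

end Nu

theorem stmt_6_general (p : ℕ) [Fact p.Prime] (hp : p ≠ 2)
    (Δ : ℤ_[p]) (hΔ : IsUnit Δ ∧ ¬IsSquare Δ)
    (e₂ e₃ : ℕ) (he : e₂ ≤ e₃) (ε₁ ε₂ ε₃ : ℤ_[p]ˣ)
    (hsq : ∃ γ : ℚ_[p], γ ≠ 0 ∧
      -((p : ℚ_[p]) ^ e₂ * ((ε₁ : ℤ_[p]) : ℚ_[p]) * ((ε₂ : ℤ_[p]) : ℚ_[p])) = γ ^ 2)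
    (k : ℕ) (hk : 4 ≤ k) (d : ℕ → ℤ_[p])
    (hd0 : d 0 = (ε₁ : ℤ_[p])) (hd1 : d 1 = (p : ℤ_[p]) ^ e₂ * (ε₂ : ℤ_[p]))
    (hd2 : d 2 = (p : ℤ_[p]) ^ e₃ * (ε₃ : ℤ_[p]))
    (hdrest : ∀ i, 3 ≤ i → i < k → ∃ (η : ℤ_[p]ˣ) (f : ℕ),
      e₃ ≤ f ∧ d i = (p : ℤ_[p]) ^ f * (η : ℤ_[p])) :
    nuMax p {c | ∃ x : ℕ → ℤ_[p], (∑ i ∈ Finset.range k, d i * (x i) ^ 2) = c}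
        (SCgen p Δ) = ((e₂ + 1 : ℕ) : ℕ∞) ∧
      ∀ s₀ ∈ SCgen p Δ,
        nuS p {c | ∃ x : ℕ → ℤ_[p], (∑ i ∈ Finset.range k, d i * (x i) ^ 2) = c} s₀ =
          nuMax p {c | ∃ x : ℕ → ℤ_[p], (∑ i ∈ Finset.range k, d i * (x i) ^ 2) = c}
            (SCgen p Δ) →
        nuMax p {c | ∃ x : ℕ → ℤ_[p], (∑ i ∈ Finset.range k, d i * (x i) ^ 2) = c}
            (SCgen p Δ \ {s₀}) = ((e₂ + 1 : ℕ) : ℕ∞) := by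
  obtain ⟨γ, -, hγ⟩ := hsq
  obtain ⟨m, rfl, δ, hδ⟩ := PadicInt.exists_sq_eq_of_pow_mul_eq_sq (u := -(ε₁ * ε₂)) (γ := γ)
    (by push_cast; linear_combination hγ)
  have hmul : ∀ c, (p : ℤ_[p]) ^ (2 * m) ∣ c →
      ∃ x : ℕ → ℤ_[p], ∑ i ∈ range k, d i * x i ^ 2 = c := by
    rintro _ ⟨w, rfl⟩
    obtain ⟨x, y, hxy⟩ := exists_mul_sq_add_mul_sq_eq (PadicInt.isUnit_two hp) ε₁ ε₂ δ
      (by simpa using hδ) w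
    obtain ⟨z, hz⟩ := exists_sum_range_eq_of_two_le (k := k) (by omega) d (p ^ m * x) y
    exact ⟨z, by rw [hz, hd0, hd1, ← hxy]; ring⟩
  have hdvd : ∀ i, 1 ≤ i → i < k → (p : ℤ_[p]) ^ (2 * m) ∣ d i := by
    intro i hi hik
    obtain rfl | rfl | h3 : i = 1 ∨ i = 2 ∨ 3 ≤ i := by omega
    · exact hd1 ▸ dvd_mul_right _ _
    · exact hd2 ▸ (pow_dvd_pow _ he).mul_right _
    · obtain ⟨η, f, hf, hdf⟩ := hdrest i h3 hik
      exact hdf ▸ (pow_dvd_pow _ (he.trans hf)).mul_right _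
  have hodd : ∀ j η, Odd j → j < 2 * m → IsUnit η →
      ¬∃ x : ℕ → ℤ_[p], ∑ i ∈ range k, d i * x i ^ 2 = p ^ j * η := by
    rintro j η hj hjm hη ⟨x, hx⟩
    obtain ⟨r, hr⟩ := exists_sum_range_eq_mul_sq_add (by omega) hdvd x
    rw [hr, hd0] at hx
    exact Nat.not_even_iff_odd.mpr hj
      (PadicInt.even_of_mul_sq_add_pow_mul_eq ε₁.isUnit hη hjm hx)
  have hΔ₁ : Δ ≠ 1 := by
    rintro rfl
    exact hΔ.2 IsSquare.one
  have hmax := nuMax_SCgen hmul hodd hp hΔ.1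
  exact ⟨hmax, fun s₀ hs₀ h₀ => nuMax_SCgen_diff hmul hodd hp hΔ.1 hΔ₁ hs₀ (h₀.trans hmax)⟩

/-- For an odd prime `p`, if `M = ⟨ε₁, p^{e₂}ε₂, p^{e₃}ε₃⟩` is isotropic and
`-p^{e₂}ε₁ε₂` is a square in `ℚ_p^×`, then for any lattice `L` of rank `k ≥ 4`
containing `M` as an orthogonal summand whose remaining diagonal entries have
`p`-order at least `e₃`, one has `ν'_p(L) = ν_p(L) = e₂ + 1`. -/
theorem stmt_6 (p : ℕ) [Fact p.Prime] (hp : p ≠ 2)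
    (Δ : ℤ_[p]) (hΔ : IsUnit Δ ∧ ¬IsSquare Δ)
    (e₂ e₃ : ℕ) (he : e₂ ≤ e₃) (ε₁ ε₂ ε₃ : ℤ_[p]ˣ)
    (hiso : ∃ v : Fin 3 → ℚ_[p], v ≠ 0 ∧
      ((ε₁ : ℤ_[p]) : ℚ_[p]) * v 0 ^ 2 +
        (p : ℚ_[p]) ^ e₂ * ((ε₂ : ℤ_[p]) : ℚ_[p]) * v 1 ^ 2 +
        (p : ℚ_[p]) ^ e₃ * ((ε₃ : ℤ_[p]) : ℚ_[p]) * v 2 ^ 2 = 0)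
    (hsq : ∃ γ : ℚ_[p], γ ≠ 0 ∧
      -((p : ℚ_[p]) ^ e₂ * ((ε₁ : ℤ_[p]) : ℚ_[p]) * ((ε₂ : ℤ_[p]) : ℚ_[p])) = γ ^ 2)
    (k : ℕ) (hk : 4 ≤ k) (d : ℕ → ℤ_[p])
    (hd0 : d 0 = (ε₁ : ℤ_[p])) (hd1 : d 1 = (p : ℤ_[p]) ^ e₂ * (ε₂ : ℤ_[p]))
    (hd2 : d 2 = (p : ℤ_[p]) ^ e₃ * (ε₃ : ℤ_[p]))
    (hdrest : ∀ i, 3 ≤ i → i < k → ∃ (η : ℤ_[p]ˣ) (f : ℕ),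
      e₃ ≤ f ∧ d i = (p : ℤ_[p]) ^ f * (η : ℤ_[p])) :
    nuMax p {c | ∃ x : ℕ → ℤ_[p], (∑ i ∈ Finset.range k, d i * (x i) ^ 2) = c}
        (SCgen p Δ) = ((e₂ + 1 : ℕ) : ℕ∞) ∧
      ∀ s₀ ∈ SCgen p Δ,
        nuS p {c | ∃ x : ℕ → ℤ_[p], (∑ i ∈ Finset.range k, d i * (x i) ^ 2) = c} s₀ =
          nuMax p {c | ∃ x : ℕ → ℤ_[p], (∑ i ∈ Finset.range k, d i * (x i) ^ 2) = c}
            (SCgen p Δ) →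
        nuMax p {c | ∃ x : ℕ → ℤ_[p], (∑ i ∈ Finset.range k, d i * (x i) ^ 2) = c}
            (SCgen p Δ \ {s₀}) = ((e₂ + 1 : ℕ) : ℕ∞) :=
  stmt_6_general p hp Δ hΔ e₂ e₃ he ε₁ ε₂ ε₃ hsq k hk d hd0 hd1 hd2 hdrest
end

section
/- Let L be a ℤ₂-lattice admitting a Jordan splitting L ≅ 𝔸 ⊥ 2^{e₃}𝔹 ⊥ ℓ where e₃ ≥ 0, 𝔹 is the binary unimodular even lattice ℍ (Gram matrix [[0,1],[1,0]]) or 𝔸 (Gram matrix [[2,1],[1,2]]), and the norm of ℓ is contained in 2^{e₃+1}ℤ₂. Then the set of elements of ℤ₂ represented by L equals {γ ∈ ℤ₂ \ {0} : ord₂(γ) is odd, or ord₂(γ) ≥ e₃} ∪ {0} if e₃ is odd, and equals {γ ∈ ℤ₂ \ {0} : ord₂(γ) is odd, or ord₂(γ) ≥ e₃+1} ∪ {0} if e₃ is even. -/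
/-!
Write `N(a, b) = a² + ab + b²`, so that `𝔸` is `2N`. Modulo `2`, `N` vanishes only at `(0, 0)`,
so by descent every nonzero value of `N` has even valuation; conversely Hensel's lemma solves
`a² + a + 1 = u` for every unit `u`, so `N` takes every value of even valuation. Hence `𝔸`
represents exactly `0` and the elements of odd valuation.

The other summands `2^e₃ 𝔹 ⊥ ℓ` only take values in `2^(e₃+1) ℤ₂`, so by the ultrametric
inequality a value of `L` of even valuation `≤ e₃` would be a value of `𝔸` of even valuation,
which is impossible. Conversely an element `c` of even valuation `≥ e₃ + 1` is a value of
`2^e₃ ℍ`; for `𝔹 = 𝔸` it is `2^(e₃+1) N(u, v)` when `e₃` is odd, and when `e₃` is even it is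
`2^(e₃+1)` plus `c - 2^(e₃+1)`, a value of `𝔸` since its valuation is `e₃ + 1`.
-/

open Matrix

namespace PadicInt

variable {p : ℕ} [Fact p.Prime] {x y : ℤ_[p]}

theorem dvd_iff_toZMod_eq_zero : (p : ℤ_[p]) ∣ x ↔ toZMod x = 0 := by
  rw [← RingHom.mem_ker, ker_toZMod, maximalIdeal_eq_span_p, Ideal.mem_span_singleton]

theorem pow_dvd_iff_le_valuation (hx : x ≠ 0) (n : ℕ) :
    (p : ℤ_[p]) ^ n ∣ x ↔ n ≤ x.valuation := by
  rw [← Ideal.mem_span_singleton, mem_span_pow_iff_le_valuation x hx]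

theorem valuation_eq_zero_of_not_dvd (h : ¬ (p : ℤ_[p]) ∣ x) : x.valuation = 0 := by
  have hx : x ≠ 0 := by rintro rfl; exact h (dvd_zero _)
  have := (pow_dvd_iff_le_valuation hx 1).not.1 (by rwa [pow_one])
  omega

theorem ne_zero_and_valuation_eq_of_pow_dvd_sub (hx : x ≠ 0)
    (h : (p : ℤ_[p]) ^ (x.valuation + 1) ∣ x - y) : y ≠ 0 ∧ y.valuation = x.valuation := by
  have hy : y ≠ 0 := by
    rintro rfl
    simp [pow_dvd_iff_le_valuation hx] at h
  have hle : x.valuation ≤ y.valuation := by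
    rw [← pow_dvd_iff_le_valuation hy, ← sub_sub_cancel x y]
    exact dvd_sub ((pow_dvd_iff_le_valuation hx _).2 le_rfl) ((pow_dvd_pow _ (by omega)).trans h)
  have hlt : ¬ x.valuation + 1 ≤ y.valuation := by
    rw [← pow_dvd_iff_le_valuation hy]
    intro hy'
    have := dvd_add h hy'
    rw [sub_add_cancel, pow_dvd_iff_le_valuation hx] at this
    omega
  exact ⟨hy, by omega⟩

theorem valuation_two_pow_mul (n : ℕ) {x : ℤ_[2]} (hx : x ≠ 0) :
    (2 ^ n * x).valuation = n + x.valuation :=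
  valuation_p_pow_mul n x hx

theorem valuation_two_pow (n : ℕ) : ((2 : ℤ_[2]) ^ n).valuation = n := by
  simpa using valuation_two_pow_mul n one_ne_zero

theorem not_two_dvd_sq_add_mul_add_sq {a b : ℤ_[2]} (h : ¬ (2 ∣ a ∧ 2 ∣ b)) :
    ¬ 2 ∣ a ^ 2 + a * b + b ^ 2 := by
  have hZMod : ∀ x y : ZMod 2, x ^ 2 + x * y + y ^ 2 = 0 → x = 0 ∧ y = 0 := by decide
  have h2 : ∀ z : ℤ_[2], 2 ∣ z ↔ toZMod z = 0 := fun z => dvd_iff_toZMod_eq_zero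
  simp only [h2, map_add, map_mul, map_pow] at h ⊢
  exact fun h' => h (hZMod _ _ h')

-- Since `valuation 0 = 0`, this covers the value `0` as well.
theorem even_valuation_sq_add_mul_add_sq (a b : ℤ_[2]) :
    Even (a ^ 2 + a * b + b ^ 2).valuation := by
  induction hn : (a ^ 2 + a * b + b ^ 2).valuation using Nat.strong_induction_on
    generalizing a b with
  | _ n ih =>
    by_cases h : 2 ∣ a ∧ 2 ∣ b
    · obtain ⟨⟨a, rfl⟩, ⟨b, rfl⟩⟩ := h
      have hscale :
          (2 * a) ^ 2 + 2 * a * (2 * b) + (2 * b) ^ 2 = 2 ^ 2 * (a ^ 2 + a * b + b ^ 2) := by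
        ring
      rw [hscale] at hn
      by_cases h0 : a ^ 2 + a * b + b ^ 2 = 0
      · rw [← hn, h0, mul_zero, valuation_zero]
        exact .zero
      · rw [valuation_two_pow_mul 2 h0] at hn
        rw [← hn]
        exact even_two.add (ih _ (by omega) a b rfl)
    · rw [← hn, valuation_eq_zero_of_not_dvd (not_two_dvd_sq_add_mul_add_sq h)]
      exact .zero

open Polynomial in
theorem exists_sq_add_add_one_eq {u : ℤ_[2]} (hu : IsUnit u) :
    ∃ a : ℤ_[2], a ^ 2 + a + 1 = u := by
  have hZMod : ∀ z : ZMod 2, z ≠ 0 → z = 1 := by decide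
  have h1u : (2 : ℤ_[2]) ∣ 1 - u := by
    refine dvd_iff_toZMod_eq_zero.2 ?_
    rw [map_sub, map_one, hZMod _ (hu.map toZMod).ne_zero, sub_self]
  -- Hensel at `0`: `F 0 = 1 - u` is even while `F' 0 = 1`.
  have hnorm : ‖(X ^ 2 + X + C (1 - u)).aeval (0 : ℤ_[2])‖ <
      ‖(derivative (X ^ 2 + X + C (1 - u))).aeval (0 : ℤ_[2])‖ ^ 2 := by
    simpa [derivative_pow] using (norm_lt_one_iff_dvd _).2 h1u
  obtain ⟨a, ha, -⟩ := hensels_lemma hnorm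
  exact ⟨a, by simp at ha; linear_combination ha⟩

theorem exists_sq_add_mul_add_sq_eq {c : ℤ_[2]} (hc : Even c.valuation) :
    ∃ a b : ℤ_[2], a ^ 2 + a * b + b ^ 2 = c := by
  obtain rfl | hc0 := eq_or_ne c 0
  · exact ⟨0, 0, by ring⟩
  obtain ⟨k, hk⟩ := hc
  obtain ⟨a, ha⟩ := exists_sq_add_add_one_eq (unitCoeff hc0).isUnit
  have hspec : c = unitCoeff hc0 * 2 ^ (k + k) := by
    simpa [hk] using unitCoeff_spec hc0
  exact ⟨2 ^ k * a, 2 ^ k, by rw [hspec, ← ha]; ring⟩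

theorem exists_two_mul_sq_add_mul_add_sq_eq_iff (c : ℤ_[2]) :
    (∃ a b : ℤ_[2], 2 * (a ^ 2 + a * b + b ^ 2) = c) ↔ c = 0 ∨ Odd c.valuation := by
  constructor
  · rintro ⟨a, b, rfl⟩
    by_cases h0 : a ^ 2 + a * b + b ^ 2 = 0
    · simp [h0]
    · right
      rw [← pow_one (2 : ℤ_[2]), valuation_two_pow_mul 1 h0]
      exact (even_valuation_sq_add_mul_add_sq a b).one_add
  · rintro (rfl | hodd)
    · exact ⟨0, 0, by ring⟩
    have hc0 : c ≠ 0 := by rintro rfl; simp at hodd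
    obtain ⟨d, rfl⟩ : (2 : ℤ_[2]) ∣ c := by
      simpa using (pow_dvd_iff_le_valuation hc0 1).2 hodd.pos
    have hv : (2 * d).valuation = 1 + d.valuation := by
      simpa using valuation_two_pow_mul 1 (right_ne_zero_of_mul hc0)
    rw [hv, Nat.odd_iff] at hodd
    obtain ⟨a, b, hab⟩ := exists_sq_add_mul_add_sq_eq (c := d) (Nat.even_iff.2 (by omega))
    exact ⟨a, b, by rw [hab]⟩

theorem odd_valuation_or_le_valuation_of_add_eq {e : ℕ} {a b r c : ℤ_[2]}
    (hr : 2 ^ (e + 1) ∣ r) (h : 2 * (a ^ 2 + a * b + b ^ 2) + r = c) (hc : c ≠ 0) :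
    Odd c.valuation ∨ e + 1 ≤ c.valuation := by
  by_contra! hlt
  have hsub : c - 2 * (a ^ 2 + a * b + b ^ 2) = r := by rw [← h, add_sub_cancel_left]
  have hdvd : (2 : ℤ_[2]) ^ (c.valuation + 1) ∣ c - 2 * (a ^ 2 + a * b + b ^ 2) :=
    hsub ▸ (pow_dvd_pow 2 (by omega)).trans hr
  obtain ⟨hne, hval⟩ := ne_zero_and_valuation_eq_of_pow_dvd_sub hc hdvd
  rcases (exists_two_mul_sq_add_mul_add_sq_eq_iff _).1 ⟨a, b, rfl⟩ with h0 | hodd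
  · exact hne h0
  · exact hlt.1 (hval ▸ hodd)

theorem exists_two_mul_sq_add_mul_add_sq_add_two_pow_mul_eq {e : ℕ} {c : ℤ_[2]}
    (hc : Even c.valuation) (hle : e + 1 ≤ c.valuation) :
    ∃ a b u v : ℤ_[2],
      2 * (a ^ 2 + a * b + b ^ 2) + 2 ^ (e + 1) * (u ^ 2 + u * v + v ^ 2) = c := by
  have hc0 : c ≠ 0 := by rintro rfl; simp at hle
  rw [Nat.even_iff] at hc
  rcases Nat.even_or_odd e with he | he <;> simp only [Nat.even_iff, Nat.odd_iff] at he
  · have hdvd : (2 : ℤ_[2]) ^ ((2 ^ (e + 1) : ℤ_[2]).valuation + 1) ∣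
        2 ^ (e + 1) - (c - 2 ^ (e + 1)) := by
      rw [valuation_two_pow, sub_sub_eq_add_sub, ← two_mul, ← pow_succ']
      exact dvd_sub dvd_rfl ((pow_dvd_iff_le_valuation hc0 _).2 (by omega))
    obtain ⟨-, hval⟩ := ne_zero_and_valuation_eq_of_pow_dvd_sub (pow_ne_zero _ two_ne_zero) hdvd
    rw [valuation_two_pow] at hval
    obtain ⟨a, b, hab⟩ := (exists_two_mul_sq_add_mul_add_sq_eq_iff (c - 2 ^ (e + 1))).2
      (.inr (Nat.odd_iff.2 (by omega)))
    exact ⟨a, b, 1, 0, by rw [hab]; ring⟩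
  · obtain ⟨d, rfl⟩ : (2 : ℤ_[2]) ^ (e + 1) ∣ c := (pow_dvd_iff_le_valuation hc0 (e + 1)).2 hle
    rw [valuation_two_pow_mul _ (right_ne_zero_of_mul hc0)] at hc
    obtain ⟨u, v, huv⟩ := exists_sq_add_mul_add_sq_eq (c := d) (Nat.even_iff.2 (by omega))
    exact ⟨0, 0, u, v, by rw [huv]; ring⟩

theorem exists_two_pow_mul_two_mul_mul_eq {e : ℕ} {c : ℤ_[2]} (hle : e + 1 ≤ c.valuation) :
    ∃ u v : ℤ_[2], 2 ^ e * (2 * u * v) = c := by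
  have hc0 : c ≠ 0 := by rintro rfl; simp at hle
  obtain ⟨d, rfl⟩ : (2 : ℤ_[2]) ^ (e + 1) ∣ c := (pow_dvd_iff_le_valuation hc0 _).2 hle
  exact ⟨d, 1, by ring⟩

theorem exists_add_two_pow_mul_add_eq_iff {e : ℕ} {B : ℤ_[2] → ℤ_[2] → ℤ_[2]} {M : Type*}
    [Zero M] {q : M → ℤ_[2]} (hB0 : B 0 0 = 0) (hB : ∀ u v, 2 ∣ B u v)
    (hBrepr : ∀ c : ℤ_[2], Even c.valuation → e + 1 ≤ c.valuation →
      ∃ a b u v, 2 * a ^ 2 + 2 * a * b + 2 * b ^ 2 + 2 ^ e * B u v = c)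
    (hq0 : q 0 = 0) (hq : ∀ w, 2 ^ (e + 1) ∣ q w) (c : ℤ_[2]) :
    (∃ a b u v w, 2 * a ^ 2 + 2 * a * b + 2 * b ^ 2 + 2 ^ e * B u v + q w = c) ↔
      c = 0 ∨ Odd c.valuation ∨ e + 1 ≤ c.valuation := by
  constructor
  · rintro ⟨a, b, u, v, w, h⟩
    obtain rfl | hc := eq_or_ne c 0
    · exact .inl rfl
    refine .inr (odd_valuation_or_le_valuation_of_add_eq (a := a) (b := b)
      (r := 2 ^ e * B u v + q w) ?_ ?_ hc)
    · exact dvd_add (pow_succ (2 : ℤ_[2]) e ▸ mul_dvd_mul_left _ (hB u v)) (hq w)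
    · rw [← h]; ring
  · intro hc
    obtain ⟨a, b, u, v, h⟩ :
        ∃ a b u v, 2 * a ^ 2 + 2 * a * b + 2 * b ^ 2 + 2 ^ e * B u v = c := by
      by_cases hodd : c = 0 ∨ Odd c.valuation
      · obtain ⟨a, b, h⟩ := (exists_two_mul_sq_add_mul_add_sq_eq_iff c).2 hodd
        exact ⟨a, b, 0, 0, by rw [hB0, ← h]; ring⟩
      · exact hBrepr c (Nat.not_odd_iff_even.1 fun h => hodd (.inr h))
          ((or_assoc.2 hc).resolve_left hodd)
    exact ⟨a, b, u, v, 0, by rw [hq0, add_zero, h]⟩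

end PadicInt

open PadicInt

theorem stmt_7_general (e₃ : ℕ) (m : ℕ) (H : Matrix (Fin m) (Fin m) ℤ_[2])
    (hnorm : ∀ w : Fin m → ℤ_[2], (2 : ℤ_[2]) ^ (e₃ + 1) ∣ w ⬝ᵥ H.mulVec w)
    (QB : ℤ_[2] → ℤ_[2] → ℤ_[2])
    (hQB : (∀ u v, QB u v = 2 * u * v) ∨
      (∀ u v, QB u v = 2 * u ^ 2 + 2 * u * v + 2 * v ^ 2)) :
    (Odd e₃ →
      {c : ℤ_[2] | ∃ (a b u v : ℤ_[2]) (w : Fin m → ℤ_[2]),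
          (2 * a ^ 2 + 2 * a * b + 2 * b ^ 2) + 2 ^ e₃ * QB u v + w ⬝ᵥ H.mulVec w = c} =
        {γ : ℤ_[2] | γ = 0 ∨ (γ ≠ 0 ∧ (Odd γ.valuation ∨ (e₃ : ℤ) ≤ γ.valuation))}) ∧
    (Even e₃ →
      {c : ℤ_[2] | ∃ (a b u v : ℤ_[2]) (w : Fin m → ℤ_[2]),
          (2 * a ^ 2 + 2 * a * b + 2 * b ^ 2) + 2 ^ e₃ * QB u v + w ⬝ᵥ H.mulVec w = c} =
        {γ : ℤ_[2] | γ = 0 ∨ (γ ≠ 0 ∧ (Odd γ.valuation ∨ (e₃ + 1 : ℤ) ≤ γ.valuation))}) := by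
  have hB : QB 0 0 = 0 ∧ (∀ u v, 2 ∣ QB u v) ∧
      ∀ c : ℤ_[2], Even c.valuation → e₃ + 1 ≤ c.valuation →
        ∃ a b u v, 2 * a ^ 2 + 2 * a * b + 2 * b ^ 2 + 2 ^ e₃ * QB u v = c := by
    rcases hQB with hQB | hQB <;> simp only [hQB]
    · refine ⟨by ring, fun u v => ⟨u * v, by ring⟩, fun c _ hle => ?_⟩
      obtain ⟨u, v, h⟩ := exists_two_pow_mul_two_mul_mul_eq hle
      exact ⟨0, 0, u, v, by rw [← h]; ring⟩
    · refine ⟨by ring, fun u v => ⟨u ^ 2 + u * v + v ^ 2, by ring⟩, fun c hc hle => ?_⟩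
      obtain ⟨a, b, u, v, h⟩ := exists_two_mul_sq_add_mul_add_sq_add_two_pow_mul_eq hc hle
      exact ⟨a, b, u, v, by rw [← h]; ring⟩
  have key := exists_add_two_pow_mul_add_eq_iff hB.1 hB.2.1 hB.2.2
    (q := fun w : Fin m → ℤ_[2] => w ⬝ᵥ H.mulVec w) (by simp) hnorm
  -- For odd `e₃`, an even valuation `≥ e₃` is `≥ e₃ + 1`.
  refine ⟨fun he => ?_, fun he => ?_⟩ <;> ext c <;>
    simp only [Set.mem_ofPred_eq, key, ne_eq, or_and_left, or_not, true_and] <;>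
    refine or_congr_right ?_ <;> simp only [Nat.odd_iff, Nat.even_iff] at he ⊢ <;> omega

/-- For `L ≅ 𝔸 ⊥ 2^{e₃}𝔹 ⊥ ℓ` over `ℤ₂` with `𝔹 ∈ {ℍ, 𝔸}` and `𝔫(ℓ) ⊆ 2^{e₃+1}ℤ₂`,
the set of represented elements is `{γ ≠ 0 : ord₂ γ odd or ≥ e₃} ∪ {0}` when `e₃` is
odd, and `{γ ≠ 0 : ord₂ γ odd or ≥ e₃ + 1} ∪ {0}` when `e₃` is even. -/
theorem stmt_7 (e₃ : ℕ) (m : ℕ) (H : Matrix (Fin m) (Fin m) ℤ_[2]) (hsym : H.IsSymm)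
    (hnorm : ∀ w : Fin m → ℤ_[2], (2 : ℤ_[2]) ^ (e₃ + 1) ∣ w ⬝ᵥ H.mulVec w)
    (QB : ℤ_[2] → ℤ_[2] → ℤ_[2])
    (hQB : (∀ u v, QB u v = 2 * u * v) ∨
      (∀ u v, QB u v = 2 * u ^ 2 + 2 * u * v + 2 * v ^ 2)) :
    (Odd e₃ →
      {c : ℤ_[2] | ∃ (a b u v : ℤ_[2]) (w : Fin m → ℤ_[2]),
          (2 * a ^ 2 + 2 * a * b + 2 * b ^ 2) + 2 ^ e₃ * QB u v + w ⬝ᵥ H.mulVec w = c} =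
        {γ : ℤ_[2] | γ = 0 ∨ (γ ≠ 0 ∧ (Odd γ.valuation ∨ (e₃ : ℤ) ≤ γ.valuation))}) ∧
    (Even e₃ →
      {c : ℤ_[2] | ∃ (a b u v : ℤ_[2]) (w : Fin m → ℤ_[2]),
          (2 * a ^ 2 + 2 * a * b + 2 * b ^ 2) + 2 ^ e₃ * QB u v + w ⬝ᵥ H.mulVec w = c} =
        {γ : ℤ_[2] | γ = 0 ∨ (γ ≠ 0 ∧ (Odd γ.valuation ∨ (e₃ + 1 : ℤ) ≤ γ.valuation))}) :=
  stmt_7_general e₃ m H hnorm QB hQB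
end

section
/- Let L be a primitive ℤ₂-lattice of rank at least 4 such that 8ℤ₂ is contained in the set of values represented by L. Then ν₂(L) ≤ 4, and in particular ν₂(L) ≤ ν'₂(L) + 3. -/
/-!
Since `8ℤ₂ ⊆ Q(L)`, the class `s·4^u` is represented as soon as `ord₂(s) + 2u ≥ 3`. Every
`s ∈ SC₂` has `ord₂(s) ≤ 1`, so `u = 2 - ord₂(s)` gives `ν_{2,s}(L) ≤ 4 - ord₂(s) ≤ 4`.
Conversely `ν_{2,s}(L) ≥ ord₂(s)`, and one of `2, 6` survives the removal of `s₀`,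
so `ν'₂(L) ≥ 1`.
-/

namespace PadicInt

variable {p : ℕ} [Fact p.Prime]

lemma pow_valuation_dvd (x : ℤ_[p]) : (p : ℤ_[p]) ^ x.valuation ∣ x := by
  rcases eq_or_ne x 0 with rfl | hx
  · exact dvd_zero _
  · exact Ideal.mem_span_singleton.mp ((mem_span_pow_iff_le_valuation x hx _).mpr le_rfl)

lemma valuation_natCast (m : ℕ) : (m : ℤ_[p]).valuation = padicValNat p m := by
  have h := valuation_coe (m : ℤ_[p])
  rw [coe_natCast, Padic.valuation_natCast] at h
  exact_mod_cast h.symm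

lemma le_valuation_natCast_iff {m : ℕ} (hm : m ≠ 0) (k : ℕ) :
    k ≤ (m : ℤ_[p]).valuation ↔ p ^ k ∣ m := by
  rw [valuation_natCast, padicValNat_dvd_iff_le hm]

end PadicInt

section nuS

variable {p : ℕ} [Fact p.Prime] {QS : Set ℤ_[p]}

lemma valuation_le_nuS (s : ℤ_[p]) : (s.valuation : ℕ∞) ≤ nuS p QS s := by
  refine le_sInf ?_
  rintro _ ⟨u, rfl, -⟩
  exact_mod_cast Nat.le_add_right _ _

lemma nuS_le_of_pow_mul_mem {k : ℕ} (hQS : ∀ c, (p : ℤ_[p]) ^ k * c ∈ QS) (s : ℤ_[p])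
    {u : ℕ} (hk : k ≤ s.valuation + 2 * u) : nuS p QS s ≤ (s.valuation + 2 * u : ℕ) := by
  obtain ⟨c, hc⟩ := PadicInt.pow_valuation_dvd s
  obtain ⟨d, hd⟩ := Nat.exists_eq_add_of_le hk
  have hmem : s * (p : ℤ_[p]) ^ (2 * u) = (p : ℤ_[p]) ^ k * ((p : ℤ_[p]) ^ d * c) := by
    rw [hc, mul_right_comm, ← pow_add, hd, pow_add, mul_assoc]
  exact sInf_le ⟨u, rfl, hmem ▸ hQS _⟩

end nuS

lemma SCgen_two : SCgen 2 0 = ((↑) : ℕ → ℤ_[2]) '' {1, 3, 5, 7, 2, 6, 10, 14} := by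
  simp [SCgen, Set.image_insert_eq]

lemma valuation_le_one_of_mem_SCgen_two {s : ℤ_[2]} (hs : s ∈ SCgen 2 0) : s.valuation ≤ 1 := by
  rw [SCgen_two] at hs
  obtain ⟨m, hm, rfl⟩ := hs
  have hm' : m ≠ 0 ∧ ¬ 2 ^ 2 ∣ m := by
    simp only [Set.mem_insert_iff, Set.mem_singleton_iff] at hm
    rcases hm with rfl | rfl | rfl | rfl | rfl | rfl | rfl | rfl <;> norm_num
  rw [← Nat.lt_succ_iff, ← not_le, PadicInt.le_valuation_natCast_iff hm'.1]
  exact hm'.2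

lemma nuMax_SCgen_two_le_four {QS : Set ℤ_[2]} (h8 : ∀ c, (8 : ℤ_[2]) * c ∈ QS) :
    nuMax 2 QS (SCgen 2 0) ≤ 4 := by
  have hQS : ∀ c, ((2 : ℕ) : ℤ_[2]) ^ 3 * c ∈ QS := fun c => by
    convert h8 c using 2
    norm_num
  refine sSup_le ?_
  rintro _ ⟨s, hs, rfl⟩
  have hv := valuation_le_one_of_mem_SCgen_two hs
  calc nuS 2 QS s ≤ (s.valuation + 2 * (2 - s.valuation) : ℕ) :=
        nuS_le_of_pow_mul_mem hQS s (by omega)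
    _ ≤ 4 := by norm_cast; omega

lemma one_le_nuMax_SCgen_two_diff (QS : Set ℤ_[2]) (s₀ : ℤ_[2]) :
    1 ≤ nuMax 2 QS (SCgen 2 0 \ {s₀}) := by
  obtain ⟨t, ht, hvt⟩ : ∃ t ∈ SCgen 2 0 \ {s₀}, 1 ≤ t.valuation := by
    have h2 : 1 ≤ (2 : ℤ_[2]).valuation := by
      simpa using (PadicInt.le_valuation_natCast_iff (p := 2) two_ne_zero 1).mpr dvd_rfl
    have h6 : 1 ≤ ((6 : ℕ) : ℤ_[2]).valuation :=
      (PadicInt.le_valuation_natCast_iff (by norm_num) 1).mpr (by norm_num)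
    by_cases hs₀ : s₀ = 2
    · refine ⟨(6 : ℕ), ⟨?_, ?_⟩, h6⟩ <;> simp [SCgen, hs₀]
    · exact ⟨2, ⟨by simp [SCgen], Ne.symm hs₀⟩, h2⟩
  have hvt' : (1 : ℕ∞) ≤ t.valuation := by exact_mod_cast hvt
  exact le_sSup_of_le (Set.mem_image_of_mem _ ht) (hvt'.trans (valuation_le_nuS t))

theorem stmt_13_general (n : ℕ)
    (B : (Fin n → ℤ_[2]) →ₗ[ℤ_[2]] (Fin n → ℤ_[2]) →ₗ[ℤ_[2]] ℤ_[2])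
    (h8 : ∀ c : ℤ_[2], (8 : ℤ_[2]) * c ∈ {c | ∃ x, B x x = c}) :
    nuMax 2 {c | ∃ x, B x x = c} (SCgen 2 0) ≤ 4 ∧
      ∀ s₀ ∈ SCgen 2 0,
        nuS 2 {c | ∃ x, B x x = c} s₀ = nuMax 2 {c | ∃ x, B x x = c} (SCgen 2 0) →
        nuMax 2 {c | ∃ x, B x x = c} (SCgen 2 0) ≤
          nuMax 2 {c | ∃ x, B x x = c} (SCgen 2 0 \ {s₀}) + 3 := by
  have hmax := nuMax_SCgen_two_le_four h8
  refine ⟨hmax, fun s₀ _ _ => ?_⟩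
  calc nuMax 2 {c | ∃ x, B x x = c} (SCgen 2 0) ≤ 1 + 3 := hmax.trans (by norm_num)
    _ ≤ nuMax 2 {c | ∃ x, B x x = c} (SCgen 2 0 \ {s₀}) + 3 := by
      gcongr
      exact one_le_nuMax_SCgen_two_diff _ s₀

/-- A primitive `ℤ₂`-lattice `L` of rank ≥ 4 with `8ℤ₂ ⊆ Q(L)` satisfies `ν₂(L) ≤ 4`;
in particular `ν₂(L) ≤ ν'₂(L) + 3`. -/
theorem stmt_13 (n : ℕ) (hn : 4 ≤ n)
    (B : (Fin n → ℤ_[2]) →ₗ[ℤ_[2]] (Fin n → ℤ_[2]) →ₗ[ℤ_[2]] ℤ_[2])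
    (hsym : ∀ x y, B x y = B y x)
    (hprim : ∃ x y, IsUnit (B x y))
    (h8 : ∀ c : ℤ_[2], (8 : ℤ_[2]) * c ∈ {c | ∃ x, B x x = c}) :
    nuMax 2 {c | ∃ x, B x x = c} (SCgen 2 0) ≤ 4 ∧
      ∀ s₀ ∈ SCgen 2 0,
        nuS 2 {c | ∃ x, B x x = c} s₀ = nuMax 2 {c | ∃ x, B x x = c} (SCgen 2 0) →
        nuMax 2 {c | ∃ x, B x x = c} (SCgen 2 0) ≤
          nuMax 2 {c | ∃ x, B x x = c} (SCgen 2 0 \ {s₀}) + 3 :=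
  stmt_13_general n B h8
end

section
/- Let ε ∈ ℤ₂^× and let e₂ ≥ 1 be odd. Then the ℤ₂-lattice ⟨ε⟩ ⊥ 2^{e₂}𝔸 (Gram matrix diag(ε) ⊥ 2^{e₂}[[2,1],[1,2]]) represents every element of 2^{e₂+1}ℤ₂, and represents no element of the form 2^{e₂}s with s ∈ ℤ₂^×. -/
/-!
The binary form `y² + yz + z²` (half of `𝔸`) represents every 2-adic unit: by Hensel's lemma
`X² + X + (1 - u)` has a root, since `1 - u` is even. Writing `e₂ = 2k + 1`, an element
`2^{e₂+1} c` is then hit by `x = 0` when `c` is a unit and by `x = 2^{k+1}` (reducing to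
representing the unit `c - ε`) when `c` is even. Conversely `ε x² + 2^{e₂+1} N = 2^{e₂} s` forces
`x² = 2^{e₂} ε⁻¹ (s - 2N)` with `s - 2N` a unit, impossible because squares have even valuation.
-/

namespace PadicInt

theorem not_isUnit_one_sub_of_isUnit {u : ℤ_[2]} (hu : IsUnit u) : ¬IsUnit (1 - u) := by
  have hres : toZMod u = 1 := by
    have : ∀ a : ZMod 2, IsUnit a → a = 1 := by decide
    exact this _ (hu.map toZMod)
  have hker : 1 - u ∈ RingHom.ker (toZMod : ℤ_[2] →+* ZMod 2) := by
    rw [RingHom.mem_ker, map_sub, map_one, hres, sub_self]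
  rwa [ker_toZMod, IsLocalRing.mem_maximalIdeal] at hker

theorem exists_sq_add_mul_add_sq_eq_of_isUnit {u : ℤ_[2]} (hu : IsUnit u) :
    ∃ y z : ℤ_[2], y ^ 2 + y * z + z ^ 2 = u := by
  open Polynomial in
  set F : ℤ_[2][X] := X ^ 2 + X + C (1 - u)
  have hF : ‖F.eval 0‖ < ‖F.derivative.eval 0‖ ^ 2 := by
    simpa [F, derivative_X_pow] using not_isUnit_iff.mp (not_isUnit_one_sub_of_isUnit hu)
  obtain ⟨y, hy, -⟩ := hensels_lemma hF
  exact ⟨y, 1, by linear_combination (by simpa [F] using hy : y ^ 2 + y + (1 - u) = 0)⟩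

end PadicInt

theorem Prime.sq_ne_pow_mul_of_isUnit {R : Type*} [CommRing R] [IsDomain R] {p : R}
    (hp : Prime p) (m : ℕ) {u : R} (hu : IsUnit u) (x : R) : x ^ 2 ≠ p ^ (2 * m + 1) * u := by
  induction m generalizing x with
  | zero =>
    intro h
    obtain ⟨t, rfl⟩ := hp.dvd_of_dvd_pow (⟨u, by simpa using h⟩ : p ∣ x ^ 2)
    have : p * t ^ 2 = u := mul_left_cancel₀ hp.ne_zero (by linear_combination h)
    exact hp.not_isUnit (isUnit_of_mul_isUnit_left (this ▸ hu))
  | succ m ih =>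
    intro h
    obtain ⟨t, rfl⟩ := hp.dvd_of_dvd_pow (⟨p ^ (2 * m + 2) * u, by rw [h]; ring⟩ : p ∣ x ^ 2)
    exact ih t (mul_left_cancel₀ (pow_ne_zero 2 hp.ne_zero) (by linear_combination h))

theorem stmt_14_general (ε : ℤ_[2]ˣ) (e₂ : ℕ) (hodd : Odd e₂) :
    (∀ c : ℤ_[2], ∃ x y z : ℤ_[2],
      (ε : ℤ_[2]) * x ^ 2 + 2 ^ e₂ * (2 * y ^ 2 + 2 * y * z + 2 * z ^ 2) =
        2 ^ (e₂ + 1) * c) ∧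
    (∀ s : ℤ_[2], IsUnit s → ∀ x y z : ℤ_[2],
      (ε : ℤ_[2]) * x ^ 2 + 2 ^ e₂ * (2 * y ^ 2 + 2 * y * z + 2 * z ^ 2) ≠
        2 ^ e₂ * s) := by
  have h2 : Prime (2 : ℤ_[2]) := by exact_mod_cast PadicInt.prime_p (p := 2)
  obtain ⟨k, rfl⟩ := hodd
  refine ⟨fun c => ?_, fun s hs x y z h => ?_⟩
  · by_cases hc : IsUnit c
    · obtain ⟨y, z, hN⟩ := PadicInt.exists_sq_add_mul_add_sq_eq_of_isUnit hc
      exact ⟨0, y, z, by linear_combination 2 ^ (2 * k + 2) * hN⟩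
    · have hcε : IsUnit (c - ε) := by
        have := IsLocalRing.isUnit_or_isUnit_of_isUnit_add (a := c) (b := ε - c) (by simp)
        simpa using (this.resolve_left hc).neg
      obtain ⟨y, z, hN⟩ := PadicInt.exists_sq_add_mul_add_sq_eq_of_isUnit hcε
      exact ⟨2 ^ (k + 1), y, z, by linear_combination 2 ^ (2 * k + 2) * hN⟩
  · set N := y ^ 2 + y * z + z ^ 2
    have hw : IsUnit (s - 2 * N) := by
      have := IsLocalRing.isUnit_or_isUnit_of_isUnit_add (a := s - 2 * N) (b := 2 * N) (by simpa)
      exact this.resolve_right fun h => h2.not_isUnit (isUnit_of_mul_isUnit_left h)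
    refine h2.sq_ne_pow_mul_of_isUnit k (ε⁻¹.isUnit.mul hw) x ?_
    linear_combination (↑ε⁻¹ : ℤ_[2]) * h - x ^ 2 * (by simp : (↑ε⁻¹ : ℤ_[2]) * ε = 1)

/-- For a unit `ε ∈ ℤ₂^×` and odd `e₂ ≥ 1`, the lattice `⟨ε⟩ ⊥ 2^{e₂}𝔸` represents
every element of `2^{e₂+1}ℤ₂` and no element `2^{e₂}s` with `s` a unit. -/
theorem stmt_14 (ε : ℤ_[2]ˣ) (e₂ : ℕ) (he₂ : 1 ≤ e₂) (hodd : Odd e₂) :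
    (∀ c : ℤ_[2], ∃ x y z : ℤ_[2],
      (ε : ℤ_[2]) * x ^ 2 + 2 ^ e₂ * (2 * y ^ 2 + 2 * y * z + 2 * z ^ 2) =
        2 ^ (e₂ + 1) * c) ∧
    (∀ s : ℤ_[2], IsUnit s → ∀ x y z : ℤ_[2],
      (ε : ℤ_[2]) * x ^ 2 + 2 ^ e₂ * (2 * y ^ 2 + 2 * y * z + 2 * z ^ 2) ≠
        2 ^ e₂ * s) :=
  stmt_14_general ε e₂ hodd
end

section
/- Let ε ∈ ℤ₂^× and let e₂ ≥ 3 be an integer. If e₂ is odd, then the ℤ₂-lattice ⟨ε⟩ ⊥ 2^{e₂}ℍ represents every element of 2^{e₂+1}ℤ₂ but no element of order exactly e₂; if e₂ is even, it represents every element of 2^{e₂}ℤ₂ of order ≥ e₂ but no nonzero element of order exactly e₂ - 1. -/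
/-!
A value of `εx²` is `0` or has even order, while `2^{e₂+1}yz` has order at least `e₂ + 1`.
By the ultrametric inequality, a value of the form of order at most `e₂` therefore has the
order of `εx²`, which is even. Conversely, a unit is `≡ 1` and every `c` satisfies `c ≡ c²` modulo `2`, so
`c = εc² + 2w`, and scaling by `2^{2k}` gives `2^{2k}c = ε(2^k c)² + 2^{2k+1}w`.
-/

namespace PadicInt

variable {p : ℕ} [Fact p.Prime]

theorem p_dvd_iff_toZMod_eq_zero (a : ℤ_[p]) : (p : ℤ_[p]) ∣ a ↔ toZMod a = 0 := by
  rw [← Ideal.mem_span_singleton, ← maximalIdeal_eq_span_p, ← ker_toZMod, RingHom.mem_ker]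

theorem norm_p_pow_mul_lt_norm {γ : ℤ_[p]} (hγ : γ ≠ 0) {m : ℕ} (hm : γ.valuation < m)
    (w : ℤ_[p]) : ‖(p : ℤ_[p]) ^ m * w‖ < ‖γ‖ := by
  have hp : (1 : ℝ) < p := mod_cast (Fact.out : p.Prime).one_lt
  calc ‖(p : ℤ_[p]) ^ m * w‖ ≤ ‖(p : ℤ_[p]) ^ m‖ := by
        rw [norm_mul]; exact mul_le_of_le_one_right (norm_nonneg _) (norm_le_one w)
    _ = (p : ℝ) ^ (-m : ℤ) := norm_p_pow m
    _ < (p : ℝ) ^ (-γ.valuation : ℤ) := zpow_lt_zpow_right₀ hp (by omega)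
    _ = ‖γ‖ := (norm_eq_zpow_neg_valuation hγ).symm

theorem valuation_eq_of_norm_eq {x y : ℤ_[p]} (hx : x ≠ 0) (hy : y ≠ 0) (h : ‖x‖ = ‖y‖) :
    x.valuation = y.valuation := by
  have hp : (1 : ℝ) < p := mod_cast (Fact.out : p.Prime).one_lt
  rw [norm_eq_zpow_neg_valuation hx, norm_eq_zpow_neg_valuation hy] at h
  have := zpow_right_injective₀ (by positivity : (0 : ℝ) < p) hp.ne' h
  omega

theorem even_valuation_of_unit_mul_sq_add_eq (ε : ℤ_[p]ˣ) {x b γ : ℤ_[p]} (hγ : γ ≠ 0)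
    (hb : ‖b‖ < ‖γ‖) (h : ε * x ^ 2 + b = γ) : Even γ.valuation := by
  have hnorm : ‖x ^ 2‖ = ‖γ‖ := by
    rw [← one_mul ‖x ^ 2‖, ← norm_units ε, ← norm_mul, ← sub_eq_of_eq_add h.symm, sub_eq_add_neg,
      IsUltrametricDist.norm_add_eq_max_of_norm_ne_norm (by rw [norm_neg]; exact hb.ne'),
      norm_neg, max_eq_left hb.le]
  have hx : x ^ 2 ≠ 0 := by
    intro hx
    exact hγ (norm_eq_zero.mp (by rw [← hnorm, hx, norm_zero]))
  rw [← valuation_eq_of_norm_eq hx hγ hnorm, valuation_pow]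
  exact even_two_mul _

theorem two_dvd_sub_unit_mul_sq (ε : ℤ_[2]ˣ) (c : ℤ_[2]) : 2 ∣ c - ε * c ^ 2 := by
  have hε : toZMod (ε : ℤ_[2]) = 1 := by
    have hu := ε.isUnit.map (toZMod : ℤ_[2] →+* ZMod 2)
    generalize toZMod (ε : ℤ_[2]) = u at hu
    fin_cases u
    · exact absurd hu not_isUnit_zero
    · rfl
  have h := p_dvd_iff_toZMod_eq_zero (p := 2) (c - ε * c ^ 2)
  rw [Nat.cast_ofNat] at h
  rw [h, map_sub, map_mul, map_pow, hε, one_mul]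
  generalize toZMod c = z
  revert z
  decide

end PadicInt

theorem stmt_15_general (ε : ℤ_[2]ˣ) (e₂ : ℕ) :
    (Odd e₂ →
      (∀ c : ℤ_[2], ∃ x y z : ℤ_[2],
        (ε : ℤ_[2]) * x ^ 2 + 2 ^ (e₂ + 1) * y * z = 2 ^ (e₂ + 1) * c) ∧
      (∀ γ : ℤ_[2], γ ≠ 0 → γ.valuation = (e₂ : ℤ) → ∀ x y z : ℤ_[2],
        (ε : ℤ_[2]) * x ^ 2 + 2 ^ (e₂ + 1) * y * z ≠ γ)) ∧
    (Even e₂ →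
      (∀ c : ℤ_[2], ∃ x y z : ℤ_[2],
        (ε : ℤ_[2]) * x ^ 2 + 2 ^ (e₂ + 1) * y * z = 2 ^ e₂ * c) ∧
      (∀ γ : ℤ_[2], γ ≠ 0 → γ.valuation = (e₂ : ℤ) - 1 → ∀ x y z : ℤ_[2],
        (ε : ℤ_[2]) * x ^ 2 + 2 ^ (e₂ + 1) * y * z ≠ γ)) := by
  have even_of_rep : ∀ γ : ℤ_[2], γ ≠ 0 → γ.valuation < e₂ + 1 → ∀ x y z : ℤ_[2],
      (ε : ℤ_[2]) * x ^ 2 + 2 ^ (e₂ + 1) * y * z = γ → Even γ.valuation :=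
    fun γ hγ hv x y z h => PadicInt.even_valuation_of_unit_mul_sq_add_eq ε (x := x) hγ
      (PadicInt.norm_p_pow_mul_lt_norm hγ hv (y * z)) (by rw [← h]; push_cast; ring)
  refine ⟨fun ⟨k, hk⟩ => ⟨fun c => ⟨0, c, 1, by ring⟩, fun γ hγ hv x y z h => ?_⟩,
    fun ⟨k, hk⟩ => ⟨fun c => ?_, fun γ hγ hv x y z h => ?_⟩⟩
  · obtain ⟨j, hj⟩ := even_of_rep γ hγ (by omega) x y z h
    omega
  · obtain ⟨w, hw⟩ := PadicInt.two_dvd_sub_unit_mul_sq ε c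
    refine ⟨2 ^ k * c, w, 1, ?_⟩
    rw [hk, ← k.two_mul]
    linear_combination -(2 : ℤ_[2]) ^ (2 * k) * hw
  · obtain ⟨j, hj⟩ := even_of_rep γ hγ (by omega) x y z h
    omega

/-- For a unit `ε ∈ ℤ₂^×` and `e₂ ≥ 3`, the lattice `⟨ε⟩ ⊥ 2^{e₂}ℍ` (quadratic form
`εx² + 2^{e₂+1}yz`): if `e₂` is odd it represents every element of `2^{e₂+1}ℤ₂` but
no element of `2`-order exactly `e₂`; if `e₂` is even it represents every element of
`2^{e₂}ℤ₂` but no nonzero element of `2`-order exactly `e₂ - 1`. -/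
theorem stmt_15 (ε : ℤ_[2]ˣ) (e₂ : ℕ) (he₂ : 3 ≤ e₂) :
    (Odd e₂ →
      (∀ c : ℤ_[2], ∃ x y z : ℤ_[2],
        (ε : ℤ_[2]) * x ^ 2 + 2 ^ (e₂ + 1) * y * z = 2 ^ (e₂ + 1) * c) ∧
      (∀ γ : ℤ_[2], γ ≠ 0 → γ.valuation = (e₂ : ℤ) → ∀ x y z : ℤ_[2],
        (ε : ℤ_[2]) * x ^ 2 + 2 ^ (e₂ + 1) * y * z ≠ γ)) ∧
    (Even e₂ →
      (∀ c : ℤ_[2], ∃ x y z : ℤ_[2],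
        (ε : ℤ_[2]) * x ^ 2 + 2 ^ (e₂ + 1) * y * z = 2 ^ e₂ * c) ∧
      (∀ γ : ℤ_[2], γ ≠ 0 → γ.valuation = (e₂ : ℤ) - 1 → ∀ x y z : ℤ_[2],
        (ε : ℤ_[2]) * x ^ 2 + 2 ^ (e₂ + 1) * y * z ≠ γ)) :=
  stmt_15_general ε e₂
end

section
/- Let ε₁, ε₂ ∈ ℤ₂^× and e₂ ≥ 0 with 2^{e₂}ε₁ε₂ ∈ 7·(ℚ₂^×)². Then the binary ℤ₂-lattice ⟨ε₁, 2^{e₂}ε₂⟩ represents every element of 2^{e₂+2}ℤ₂. -/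
/-! Since `-7` is a square in `ℤ₂`, the hypothesis makes `-2^{e₂}ε₁ε₂ = τ²` a square in `ℚ₂`, and
`τ ∈ ℤ₂` because `τ²` is integral. Hence `⟨a, b⟩ = ⟨ε₁, 2^{e₂}ε₂⟩` is isotropic and factors as
`a (x - w)(x + w)` with `w = τ y / a`; taking `x = τ(1 + d)`, `y = a(1 - d)` gives the value
`-4a²bd`, which for `d = -c/a²` is `4bc`. -/

@[simp, norm_cast]
theorem PadicInt.coe_ofNat {p : ℕ} [Fact p.Prime] (n : ℕ) [n.AtLeastTwo] :
    ((ofNat(n) : ℤ_[p]) : ℚ_[p]) = ofNat(n) :=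
  rfl

theorem PadicInt.isSquare_neg_seven : IsSquare (-7 : ℤ_[2]) := by
  let f : Polynomial ℤ_[2] := Polynomial.X ^ 2 + 7
  have hf : f.eval 1 = 2 ^ 3 := by norm_num [f]
  have hf' : f.derivative.eval 1 = 2 := by norm_num [f]
  have hnorm : ‖f.eval 1‖ < ‖f.derivative.eval 1‖ ^ 2 := by
    have h2 : ‖(2 : ℤ_[2])‖ = 2⁻¹ := by simpa using PadicInt.norm_p (p := 2)
    rw [hf, hf', norm_pow, h2]
    norm_num
  obtain ⟨z, hz, -⟩ := hensels_lemma hnorm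
  exact ⟨z, by linear_combination (-1 : ℤ_[2]) * (by simpa [f] using hz : z ^ 2 + 7 = 0)⟩

theorem PadicInt.isSquare_of_isSquare_coe {p : ℕ} [Fact p.Prime] {r : ℤ_[p]}
    (h : IsSquare (r : ℚ_[p])) : IsSquare r := by
  obtain ⟨x, hx⟩ := h
  have hx1 : ‖x‖ ≤ 1 := by
    have : ‖x‖ * ‖x‖ ≤ 1 := by rw [← norm_mul, ← hx]; exact r.norm_le_one
    nlinarith [norm_nonneg x]
  exact ⟨⟨x, hx1⟩, Subtype.ext hx⟩

theorem exists_mul_sq_add_mul_sq_eq_four_mul {R : Type*} [CommRing R] (a : Rˣ) {b : R}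
    (h : IsSquare (-(a * b))) (c : R) : ∃ x y : R, a * x ^ 2 + b * y ^ 2 = 4 * b * c := by
  obtain ⟨τ, hτ⟩ := h
  let d : R := -(a⁻¹ : Rˣ) ^ 2 * c
  have ha : (a : R) * (a⁻¹ : Rˣ) = 1 := a.mul_inv
  refine ⟨τ * (1 + d), a * (1 - d), ?_⟩
  linear_combination (-(a : R) * (1 + d) ^ 2) * hτ + 4 * b * c * (a * (a⁻¹ : Rˣ) + 1) * ha

/-- If `ε₁, ε₂ ∈ ℤ₂^×` and `2^{e₂}ε₁ε₂ ∈ 7·(ℚ₂^×)²`, then the binary lattice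
`⟨ε₁, 2^{e₂}ε₂⟩` represents every element of `2^{e₂+2}ℤ₂`. -/
theorem stmt_16 (ε₁ ε₂ : ℤ_[2]ˣ) (e₂ : ℕ)
    (hsq : ∃ γ : ℚ_[2], γ ≠ 0 ∧
      (2 : ℚ_[2]) ^ e₂ * ((ε₁ : ℤ_[2]) : ℚ_[2]) * ((ε₂ : ℤ_[2]) : ℚ_[2]) = 7 * γ ^ 2) :
    ∀ c : ℤ_[2], ∃ x y : ℤ_[2],
      (ε₁ : ℤ_[2]) * x ^ 2 + 2 ^ e₂ * (ε₂ : ℤ_[2]) * y ^ 2 = 2 ^ (e₂ + 2) * c := by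
  obtain ⟨γ, -, hγ⟩ := hsq
  obtain ⟨z, hz⟩ := PadicInt.isSquare_neg_seven
  have hiso : IsSquare (-(ε₁ * (2 ^ e₂ * ε₂)) : ℤ_[2]) := by
    refine PadicInt.isSquare_of_isSquare_coe ⟨z * γ, ?_⟩
    have hzQ := congrArg ((↑) : ℤ_[2] → ℚ_[2]) hz
    push_cast at hzQ ⊢
    linear_combination -hγ + γ ^ 2 * hzQ
  intro c
  obtain ⟨x, y, hxy⟩ := exists_mul_sq_add_mul_sq_eq_four_mul ε₁ hiso ((ε₂⁻¹ : ℤ_[2]ˣ) * c)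
  refine ⟨x, y, ?_⟩
  rw [hxy]
  linear_combination 4 * 2 ^ e₂ * c * ε₂.mul_inv
end
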